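/- arXiv:2207.01051 — 2 statements merged into one kernel-verified Lean document; each statement's English description precedes it below -/
import Mathlib

section
/- Let D be a digraph containing a 3-thread [w, x, y, z], and let D′ = (D − {x, y}) ∪ [w, z] be the digraph obtained by contracting this 3-thread. Then (i) ρ(D′) ≥ ρ(D), and (ii) if D has no 2-dicolouring, then D′ has no 2-dicolouring. -/
/-!
Basic theory of finite digraphs: a digraph has a finite vertex set and a
finite set of arcs (ordered pairs of distinct vertices).
-/

/-- A finite digraph on a vertex type `V`: a finite vertex set together with a
finite set of arcs, each arc being an ordered pair of distinct vertices. -/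
structure Digraph' (V : Type*) where
  verts : Finset V
  arcs : Finset (V × V)
  wf : ∀ a ∈ arcs, a.1 ∈ verts ∧ a.2 ∈ verts ∧ a.1 ≠ a.2

namespace Digraph'

variable {V : Type*} [DecidableEq V]

/-- The number of vertices of a digraph. -/
def n (D : Digraph' V) : ℕ := D.verts.card

/-- The number of arcs of a digraph. -/
def m (D : Digraph' V) : ℕ := D.arcs.card

/-- The set of consecutive (cyclically) pairs of a list, i.e. the arcs of the
directed cycle running through the list. -/
def cyclicArcs (c : List V) : Finset (V × V) := (c.zip (c.rotate 1)).toFinset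

/-- The set of consecutive pairs of a list, i.e. the arcs of the directed path
running through the list. -/
def pathArcs (p : List V) : Finset (V × V) := (p.zip p.tail).toFinset

/-- The symmetric closure of a set of arcs. -/
def symArcs (s : Finset (V × V)) : Finset (V × V) := s ∪ s.image Prod.swap

/-- The arcs of the bidirected path running through a list (each consecutive
pair is joined by a digon). -/
def pathDigonArcs (p : List V) : Finset (V × V) := symArcs (pathArcs p)

/-- `p` is the list of vertices of a path of odd length (an odd number of edges,
equivalently an even number of vertices) from `a` to `b`. -/
def IsOddBidirPathList (p : List V) (a b : V) : Prop :=
  p.Nodup ∧ Even p.length ∧ p.head? = some a ∧ p.getLast? = some b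

/-- The subdigraph induced by `S` contains no directed cycle.  A directed cycle
is given by a nonempty list of at least two distinct vertices, each one having an
arc towards the (cyclically) next one. -/
def AcyclicOn (D : Digraph' V) (S : Finset V) : Prop :=
  ¬ ∃ c : List V, c.Nodup ∧ 2 ≤ c.length ∧ (∀ v ∈ c, v ∈ S) ∧ cyclicArcs c ⊆ D.arcs

/-- `φ` is a `k`-dicolouring of `D`: every colour class induces an acyclic
subdigraph. -/
def IsDicolouring (D : Digraph' V) (k : ℕ) (φ : V → Fin k) : Prop :=
  ∀ i : Fin k, D.AcyclicOn (D.verts.filter fun v => φ v = i)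

/-- `D` admits a `k`-dicolouring. -/
def Dicolourable (D : Digraph' V) (k : ℕ) : Prop :=
  ∃ φ : V → Fin k, D.IsDicolouring k φ

/-- The dichromatic number of `D`: the least `k` such that `D` is
`k`-dicolourable. -/
noncomputable def dichromatic (D : Digraph' V) : ℕ := sInf {k | D.Dicolourable k}

/-- `H` is a subdigraph of `D`. -/
def IsSubdigraph (H D : Digraph' V) : Prop := H.verts ⊆ D.verts ∧ H.arcs ⊆ D.arcs

/-- `H` is a proper subdigraph of `D`. -/
def IsProperSubdigraph (H D : Digraph' V) : Prop :=
  H.IsSubdigraph D ∧ (H.verts ≠ D.verts ∨ H.arcs ≠ D.arcs)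

/-- `D` is `k`-dicritical: its dichromatic number is `k` and every proper
subdigraph has dichromatic number at most `k - 1`. -/
def Dicritical (k : ℕ) (D : Digraph' V) : Prop :=
  D.dichromatic = k ∧
    ∀ H : Digraph' V, H.IsProperSubdigraph D → H.dichromatic ≤ k - 1

/-- `D` is an oriented graph: it has no digon. -/
def Oriented (D : Digraph' V) : Prop := ∀ a ∈ D.arcs, (a.2, a.1) ∉ D.arcs

/-- There is a digon between `u` and `v` in `D`. -/
def HasDigon (D : Digraph' V) (u v : V) : Prop :=
  (u, v) ∈ D.arcs ∧ (v, u) ∈ D.arcs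

/-- `u` and `v` are neighbours: there is at least one arc between them. -/
def UAdj (D : Digraph' V) (u v : V) : Prop :=
  (u, v) ∈ D.arcs ∨ (v, u) ∈ D.arcs

/-- `M` is a matching of digons of `D` (a matching of the digon graph `B(D)`):
a set of digons of `D`, pairwise sharing no end-vertex. -/
def IsDigonMatching (D : Digraph' V) (M : Finset (V × V)) : Prop :=
  (∀ p ∈ M, D.HasDigon p.1 p.2) ∧
    ∀ p ∈ M, ∀ q ∈ M, p ≠ q → p.1 ≠ q.1 ∧ p.1 ≠ q.2 ∧ p.2 ≠ q.1 ∧ p.2 ≠ q.2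

/-- `π(D)`: the maximum size of a matching of the digon graph `B(D)`. -/
noncomputable def piNum (D : Digraph' V) : ℕ :=
  sSup {k | ∃ M : Finset (V × V), D.IsDigonMatching M ∧ M.card = k}

/-- The potential `ρ(D) = 7 n(D) - 3 m(D) - 2 π(D)`. -/
noncomputable def potential (D : Digraph' V) : ℤ :=
  7 * (D.n : ℤ) - 3 * (D.m : ℤ) - 2 * (D.piNum : ℤ)

/-- The subdigraph of `D` induced by `R`. -/
def induce (D : Digraph' V) (R : Finset V) : Digraph' V where
  verts := D.verts ∩ R
  arcs := D.arcs.filter fun a => a.1 ∈ R ∧ a.2 ∈ R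
  wf := by
    intro a ha
    rw [Finset.mem_filter] at ha
    obtain ⟨h, h1, h2⟩ := ha
    obtain ⟨hv1, hv2, hne⟩ := D.wf a h
    exact ⟨Finset.mem_inter.mpr ⟨hv1, h1⟩, Finset.mem_inter.mpr ⟨hv2, h2⟩, hne⟩

/-- The potential `ρ_D(R)` of a set of vertices `R` in `D`: the potential of the
subdigraph of `D` induced by `R`. -/
noncomputable def potentialOn (D : Digraph' V) (R : Finset V) : ℤ :=
  (D.induce R).potential

/-- The digraph obtained from `D` by deleting the arc `a`. -/
def eraseArc (D : Digraph' V) (a : V × V) : Digraph' V where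
  verts := D.verts
  arcs := D.arcs.erase a
  wf := fun b hb => D.wf b (Finset.mem_of_mem_erase hb)

/-- The digraph obtained from `D` by deleting the vertex `v`. -/
def delVert (D : Digraph' V) (v : V) : Digraph' V where
  verts := D.verts.erase v
  arcs := D.arcs.filter fun a => a.1 ≠ v ∧ a.2 ≠ v
  wf := by
    intro a ha
    rw [Finset.mem_filter] at ha
    obtain ⟨h, h1, h2⟩ := ha
    obtain ⟨hv1, hv2, hne⟩ := D.wf a h
    exact ⟨Finset.mem_erase.mpr ⟨h1, hv1⟩, Finset.mem_erase.mpr ⟨h2, hv2⟩, hne⟩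

/-- The degree of `v` in `D`: the number of arcs incident to `v`. -/
def degree (D : Digraph' V) (v : V) : ℕ :=
  (D.arcs.filter fun a => a.1 = v ∨ a.2 = v).card

/-- `D` is a bidirected odd cycle: obtained from an undirected cycle of odd
length (at least 3) by replacing every edge by a digon. -/
def IsBidirectedOddCycle (D : Digraph' V) : Prop :=
  ∃ c : List V, c.Nodup ∧ 3 ≤ c.length ∧ Odd c.length ∧
    D.verts = c.toFinset ∧ D.arcs = symArcs (cyclicArcs c)

/-- `H` is a bidirected odd cycle with one arc removed. -/
def IsBidirOddCycleMinusArc (H : Digraph' V) : Prop :=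
  ∃ (C : Digraph' V) (e : V × V), C.IsBidirectedOddCycle ∧ e ∈ C.arcs ∧
    H.verts = C.verts ∧ H.arcs = C.arcs.erase e

/-- `D` is an odd 3-wheel with center `c`: a vertex `c` joined to a directed
3-cycle `(x, y, z, x)` by three bidirected paths of odd length, pairwise
disjoint except in `c`. -/
def IsOdd3WheelWithCenter (D : Digraph' V) (c : V) : Prop :=
  ∃ (p₁ p₂ p₃ : List V) (x y z : V),
    IsOddBidirPathList p₁ c x ∧ IsOddBidirPathList p₂ c y ∧ IsOddBidirPathList p₃ c z ∧
    p₁.toFinset ∩ p₂.toFinset = {c} ∧ p₁.toFinset ∩ p₃.toFinset = {c} ∧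
    p₂.toFinset ∩ p₃.toFinset = {c} ∧
    D.verts = p₁.toFinset ∪ p₂.toFinset ∪ p₃.toFinset ∧
    D.arcs = pathDigonArcs p₁ ∪ pathDigonArcs p₂ ∪ pathDigonArcs p₃ ∪
      {(x, y), (y, z), (z, x)}

/-- `D` is an odd 3-wheel. -/
def IsOdd3Wheel (D : Digraph' V) : Prop := ∃ c : V, D.IsOdd3WheelWithCenter c

end Digraph'

/-!
Since `x` and `y` have degree 4, their only arcs are the six arcs of the thread, so the
contraction removes at least `6 - 2 = 4` arcs and two vertices. A maximum digon matching of
`D'` extends to a strictly larger one of `D`: a matched digon `[w, z]` is replaced by `[w, x]`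
and `[y, z]`, and otherwise `[x, y]` is added. Hence `ρ` changes by at least
`-14 + 3 · 4 + 2 · 1 = 0`. For the colouring, `w` and `z` get different colours in `D'`;
giving `x` the colour of `z` and `y` the colour of `w`, each of `x` and `y` has all its
out-neighbours in the other colour, so it lies on no monochromatic cycle.
-/

namespace Digraph'

variable {V : Type*} {D D' : Digraph' V}

theorem HasDigon.ne {u v : V} (h : D.HasDigon u v) : u ≠ v := (D.wf _ h.1).2.2

theorem bddAbove_card_isDigonMatching (D : Digraph' V) :
    BddAbove {k | ∃ M : Finset (V × V), D.IsDigonMatching M ∧ M.card = k} :=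
  ⟨D.m, by rintro _ ⟨M, hM, rfl⟩; exact Finset.card_le_card fun p hp => (hM.1 p hp).1⟩

theorem IsDigonMatching.card_le_piNum {M : Finset (V × V)} (hM : D.IsDigonMatching M) :
    M.card ≤ D.piNum :=
  le_csSup D.bddAbove_card_isDigonMatching ⟨M, hM, rfl⟩

theorem exists_isDigonMatching_card_eq_piNum (D : Digraph' V) :
    ∃ M, D.IsDigonMatching M ∧ M.card = D.piNum :=
  Nat.sSup_mem (s := {k | ∃ M : Finset (V × V), D.IsDigonMatching M ∧ M.card = k})
    ⟨0, ∅, ⟨by simp, by simp⟩, rfl⟩ D.bddAbove_card_isDigonMatching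

variable [DecidableEq V]

def incidentArcs (D : Digraph' V) (v : V) : Finset (V × V) :=
  D.arcs.filter fun a => a.1 = v ∨ a.2 = v

theorem degree_eq_card_incidentArcs (v : V) : D.degree v = (D.incidentArcs v).card := rfl

theorem incidentArcs_eq_of_degree_eq_four {u v t : V} (hu : D.HasDigon u v)
    (ht : D.HasDigon v t) (hut : u ≠ t) (hdeg : D.degree v = 4) :
    D.incidentArcs v = {(u, v), (v, u), (v, t), (t, v)} := by
  have huv := hu.ne
  have hvt := ht.ne
  refine (Finset.eq_of_subset_of_card_le ?_ ?_).symm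
  · intro a ha
    simp only [Finset.mem_insert, Finset.mem_singleton] at ha
    rcases ha with rfl | rfl | rfl | rfl <;>
      simp [incidentArcs, hu.1, hu.2, ht.1, ht.2]
  · rw [← degree_eq_card_incidentArcs, hdeg]
    refine (Finset.card_eq_four.mpr ⟨(u, v), (v, u), (v, t), (t, v), ?_⟩).ge
    simp [huv, hvt, huv.symm, hvt.symm, hut]

theorem eq_or_eq_of_degree_eq_four {u v t s : V} (hu : D.HasDigon u v)
    (ht : D.HasDigon v t) (hut : u ≠ t) (hdeg : D.degree v = 4) (hs : (v, s) ∈ D.arcs) :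
    s = u ∨ s = t := by
  have hvs : (v, s) ∈ D.incidentArcs v := Finset.mem_filter.mpr ⟨hs, Or.inl rfl⟩
  rw [incidentArcs_eq_of_degree_eq_four hu ht hut hdeg] at hvs
  have := (D.wf _ hs).2.2
  simp only [Finset.mem_insert, Finset.mem_singleton, Prod.mk.injEq] at hvs
  tauto

abbrev Avoids (x y : V) (a : V × V) : Prop := a.1 ≠ x ∧ a.2 ≠ x ∧ a.1 ≠ y ∧ a.2 ≠ y

def arcsAvoiding (D : Digraph' V) (x y : V) : Finset (V × V) := D.arcs.filter (Avoids x y)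

theorem card_arcsAvoiding_add_degree_add_degree_le {x y : V} (hxy : x ≠ y) :
    (D.arcsAvoiding x y).card + D.degree x + D.degree y ≤ D.m + 2 := by
  have hsplit := Finset.card_filter_add_card_filter_not (s := D.arcs) (p := Avoids x y)
  have hunion :
      D.arcs.filter (fun a => ¬ Avoids x y a) = D.incidentArcs x ∪ D.incidentArcs y := by
    ext a
    simp only [Finset.mem_filter, Finset.mem_union, incidentArcs, Avoids]
    tauto
  have hinter : D.incidentArcs x ∩ D.incidentArcs y ⊆ {(x, y), (y, x)} := by
    intro a ha
    simp only [incidentArcs, Finset.mem_inter, Finset.mem_filter] at ha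
    have := (D.wf a ha.1.1).2.2
    obtain ⟨a1, a2⟩ := a
    simp only [Finset.mem_insert, Finset.mem_singleton, Prod.mk.injEq]
    grind
  have := Finset.card_union_add_card_inter (D.incidentArcs x) (D.incidentArcs y)
  have := (Finset.card_le_card hinter).trans Finset.card_le_two
  rw [hunion] at hsplit
  rw [degree_eq_card_incidentArcs, degree_eq_card_incidentArcs, m, ← hsplit, arcsAvoiding]
  omega

section Matching

variable {M : Finset (V × V)}

theorem IsDigonMatching.insert {u v : V} (hM : D.IsDigonMatching M) (huv : D.HasDigon u v)
    (hfree : ∀ q ∈ M, Avoids u v q) : D.IsDigonMatching (insert (u, v) M) := by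
  constructor
  · intro p hp
    rcases Finset.mem_insert.mp hp with rfl | hp
    exacts [huv, hM.1 p hp]
  · intro p hp q hq hpq
    rcases Finset.mem_insert.mp hp with rfl | hp <;> rcases Finset.mem_insert.mp hq with rfl | hq
    · exact absurd rfl hpq
    · obtain ⟨h1, h2, h3, h4⟩ := hfree q hq
      exact ⟨h1.symm, h2.symm, h3.symm, h4.symm⟩
    · obtain ⟨h1, h2, h3, h4⟩ := hfree p hp
      exact ⟨h1, h3, h2, h4⟩
    · exact hM.2 p hp q hq hpq

theorem card_insert_of_forall_avoids {u v : V} (hfree : ∀ q ∈ M, Avoids u v q) :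
    (insert (u, v) M).card = M.card + 1 :=
  Finset.card_insert_of_notMem fun h => (hfree _ h).1 rfl

theorem IsDigonMatching.card_add_one_le_piNum {u v : V} (hM : D.IsDigonMatching M)
    (huv : D.HasDigon u v) (hfree : ∀ q ∈ M, Avoids u v q) : M.card + 1 ≤ D.piNum :=
  card_insert_of_forall_avoids hfree ▸ (hM.insert huv hfree).card_le_piNum

end Matching

theorem mem_cyclicArcs_fst {c : List V} {v : V} (hv : v ∈ c) :
    ∃ s ∈ c, (v, s) ∈ cyclicArcs c := by
  have hlen : c.length ≤ (c.rotate 1).length := (List.length_rotate c 1).ge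
  have : v ∈ (c.zip (c.rotate 1)).map Prod.fst := by
    rw [List.map_fst_zip hlen]; exact hv
  obtain ⟨p, hp, hpv⟩ := List.mem_map.mp this
  exact ⟨p.2, List.mem_rotate.mp (List.of_mem_zip hp).2,
    by simpa [cyclicArcs, ← hpv] using hp⟩

theorem mem_of_mem_cyclicArcs {c : List V} {a : V × V} (ha : a ∈ cyclicArcs c) :
    a.1 ∈ c ∧ a.2 ∈ c := by
  rw [cyclicArcs, List.mem_toFinset] at ha
  obtain ⟨h1, h2⟩ := List.of_mem_zip ha
  exact ⟨h1, List.mem_rotate.mp h2⟩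

theorem cyclicArcs_pair (u v : V) : cyclicArcs [u, v] = {(u, v), (v, u)} := by
  simp [cyclicArcs, List.rotate]

theorem cyclicArcs_subset_arcsAvoiding {c : List V} {x y : V} (hc : cyclicArcs c ⊆ D.arcs)
    (hx : x ∉ c) (hy : y ∉ c) : cyclicArcs c ⊆ D.arcsAvoiding x y := by
  intro a ha
  obtain ⟨h1, h2⟩ := mem_of_mem_cyclicArcs ha
  exact Finset.mem_filter.mpr
    ⟨hc ha, ne_of_mem_of_not_mem h1 hx, ne_of_mem_of_not_mem h2 hx,
      ne_of_mem_of_not_mem h1 hy, ne_of_mem_of_not_mem h2 hy⟩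

theorem not_mem_of_forall_arc_colour_ne {k : ℕ} {ψ : V → Fin k} {i : Fin k} {c : List V}
    (hc : cyclicArcs c ⊆ D.arcs) (hcol : ∀ v ∈ c, ψ v = i) {v : V}
    (hv : ∀ s, (v, s) ∈ D.arcs → ψ s ≠ ψ v) : v ∉ c := by
  intro hvc
  obtain ⟨s, hs, hvs⟩ := mem_cyclicArcs_fst hvc
  exact hv s (hc hvs) ((hcol s hs).trans (hcol v hvc).symm)

theorem IsDicolouring.ne_of_hasDigon {k : ℕ} {φ : V → Fin k} (hφ : D.IsDicolouring k φ)
    {u v : V} (h : D.HasDigon u v) : φ u ≠ φ v := by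
  intro heq
  refine hφ (φ u) ⟨[u, v], by simp [h.ne], by simp, ?_, ?_⟩
  · simp [(D.wf _ h.1).1, (D.wf _ h.1).2.1, heq]
  · rw [cyclicArcs_pair]
    simp [Finset.insert_subset_iff, h.1, h.2]

section Contraction

variable {w x y z : V}

theorem hasDigon_of_hasDigon_contraction
    (harcs : D'.arcs ⊆ D.arcsAvoiding x y ∪ {(w, z), (z, w)}) {a b : V}
    (h : D'.HasDigon a b) (hwz : (a, b) ≠ (w, z)) (hzw : (a, b) ≠ (z, w)) :
    D.HasDigon a b ∧ Avoids x y (a, b) := by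
  have hab := harcs h.1
  have hba := harcs h.2
  simp only [arcsAvoiding, Finset.mem_union, Finset.mem_filter, Finset.mem_insert,
    Finset.mem_singleton, Prod.mk.injEq] at hab hba hwz hzw
  refine ⟨⟨?_, ?_⟩, ?_⟩ <;> grind

theorem piNum_add_one_le_of_contraction (hwy : w ≠ y) (hxz : x ≠ z) (hwx : D.HasDigon w x)
    (hxy : D.HasDigon x y) (hyz : D.HasDigon y z)
    (harcs : D'.arcs ⊆ D.arcsAvoiding x y ∪ {(w, z), (z, w)}) :
    D'.piNum + 1 ≤ D.piNum := by
  obtain ⟨M', hM', hcard⟩ := D'.exists_isDigonMatching_card_eq_piNum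
  rw [← hcard]
  have hold : ∀ q ∈ M', q ≠ (w, z) → q ≠ (z, w) → D.HasDigon q.1 q.2 ∧ Avoids x y q :=
    fun q hq => hasDigon_of_hasDigon_contraction harcs (hM'.1 q hq)
  by_cases hwz : ∃ p ∈ M', p = (w, z) ∨ p = (z, w)
  · obtain ⟨p, hp, hpwz⟩ := hwz
    have hwz : w ≠ z := by
      rcases hpwz with rfl | rfl
      exacts [(hM'.1 _ hp).ne, (hM'.1 _ hp).ne.symm]
    have hfree : ∀ q ∈ M'.erase p, D.HasDigon q.1 q.2 ∧ Avoids x y q ∧ Avoids w z q := by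
      intro q hq
      obtain ⟨hqp, hq⟩ := Finset.mem_erase.mp hq
      have hdisj := hM'.2 p hp q hq (Ne.symm hqp)
      have hqwz : q ≠ (w, z) ∧ q ≠ (z, w) := by
        rcases hpwz with rfl | rfl <;> constructor <;> rintro rfl <;> simp at hdisj
      refine ⟨(hold q hq hqwz.1 hqwz.2).1, (hold q hq hqwz.1 hqwz.2).2, ?_⟩
      rcases hpwz with rfl | rfl <;> grind
    have hM₀ : D.IsDigonMatching (M'.erase p) :=
      ⟨fun q hq => (hfree q hq).1, fun a ha b hb => hM'.2 a (Finset.mem_of_mem_erase ha) b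
        (Finset.mem_of_mem_erase hb)⟩
    have hyzfree : ∀ q ∈ M'.erase p, Avoids y z q := fun q hq => by
      have := hfree q hq
      grind
    have hwxfree : ∀ q ∈ insert (y, z) (M'.erase p), Avoids w x q := by
      intro q hq
      rcases Finset.mem_insert.mp hq with rfl | hq
      · exact ⟨hwy.symm, hwz.symm, hxy.ne.symm, hxz.symm⟩
      · have := hfree q hq
        grind
    have hcard : (insert (y, z) (M'.erase p)).card = M'.card := by
      rw [card_insert_of_forall_avoids hyzfree, Finset.card_erase_add_one hp]
    exact hcard ▸ (hM₀.insert hyz hyzfree).card_add_one_le_piNum hwx hwxfree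
  · push Not at hwz
    have hM : D.IsDigonMatching M' :=
      ⟨fun q hq => (hold q hq (hwz q hq).1 (hwz q hq).2).1, hM'.2⟩
    exact hM.card_add_one_le_piNum hxy fun q hq => (hold q hq (hwz q hq).1 (hwz q hq).2).2

theorem dicolourable_of_dicolourable_contraction {k : ℕ} (hwy : w ≠ y) (hxz : x ≠ z)
    (hwx : D.HasDigon w x) (hxy : D.HasDigon x y) (hyz : D.HasDigon y z)
    (hdegx : D.degree x = 4) (hdegy : D.degree y = 4)
    (hverts : (D.verts.erase x).erase y ⊆ D'.verts)
    (harcs : D.arcsAvoiding x y ∪ {(w, z), (z, w)} ⊆ D'.arcs) :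
    D'.Dicolourable k → D.Dicolourable k := by
  rintro ⟨φ, hφ⟩
  have hwz : φ w ≠ φ z := hφ.ne_of_hasDigon ⟨harcs (by simp), harcs (by simp)⟩
  set ψ := Function.update (Function.update φ x (φ z)) y (φ w)
  have hψy : ψ y = φ w := by simp [ψ]
  have hψx : ψ x = φ z := by simp [ψ, hxy.ne]
  have hψ : ∀ v, v ≠ x → v ≠ y → ψ v = φ v := fun v hvx hvy => by simp [ψ, hvx, hvy]
  have hψw : ψ w = φ w := hψ w hwx.ne hwy
  have hψz : ψ z = φ z := hψ z hxz.symm hyz.ne.symm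
  refine ⟨ψ, fun i ⟨c, hnd, hlen, hmem, hsub⟩ => ?_⟩
  have hcol : ∀ v ∈ c, ψ v = i := fun v hv => (Finset.mem_filter.mp (hmem v hv)).2
  have hx : x ∉ c := not_mem_of_forall_arc_colour_ne hsub hcol fun s hs => by
    rcases eq_or_eq_of_degree_eq_four hwx hxy hwy hdegx hs with rfl | rfl <;> simp [*]
  have hy : y ∉ c := not_mem_of_forall_arc_colour_ne hsub hcol fun s hs => by
    rcases eq_or_eq_of_degree_eq_four hxy hyz hxz hdegy hs with rfl | rfl <;> simp [*, hwz.symm]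
  refine hφ i ⟨c, hnd, hlen, fun v hv => ?_,
    (cyclicArcs_subset_arcsAvoiding hsub hx hy).trans (Finset.subset_union_left.trans harcs)⟩
  have hvx : v ≠ x := ne_of_mem_of_not_mem hv hx
  have hvy : v ≠ y := ne_of_mem_of_not_mem hv hy
  obtain ⟨hvD, hvi⟩ := Finset.mem_filter.mp (hmem v hv)
  exact Finset.mem_filter.mpr ⟨hverts (by simp [hvD, hvx, hvy]), hψ v hvx hvy ▸ hvi⟩

end Contraction

end Digraph'

open Digraph' in
/-- Let `D` contain a 3-thread `[w, x, y, z]` (a bidirected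
path whose internal vertices `x` and `y` have degree 4 in `D`), and let `D'` be
obtained from `D` by contracting this 3-thread, i.e. deleting `x, y` and adding
the digon `[w, z]`. Then `ρ(D') ≥ ρ(D)`, and if `D` has no 2-dicolouring then
neither has `D'`. -/
theorem contract_three_thread {V : Type*} [DecidableEq V]
    (D D' : Digraph' V) (w x y z : V)
    (hdistinct : ([w, x, y, z] : List V).Nodup)
    (hwx : D.HasDigon w x) (hxy : D.HasDigon x y) (hyz : D.HasDigon y z)
    (hdegx : D.degree x = 4) (hdegy : D.degree y = 4)
    (hverts : D'.verts = (D.verts.erase x).erase y)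
    (harcs : D'.arcs =
      (D.arcs.filter fun a => a.1 ≠ x ∧ a.2 ≠ x ∧ a.1 ≠ y ∧ a.2 ≠ y) ∪
        {(w, z), (z, w)}) :
    D.potential ≤ D'.potential ∧
      (¬ D.Dicolourable 2 → ¬ D'.Dicolourable 2) := by
  have harcs : D'.arcs = D.arcsAvoiding x y ∪ {(w, z), (z, w)} := harcs
  obtain ⟨hwy, hxz⟩ : w ≠ y ∧ x ≠ z := by
    simp only [List.nodup_cons, List.mem_cons] at hdistinct
    tauto
  refine ⟨?_, mt (dicolourable_of_dicolourable_contraction hwy hxz hwx hxy hyz hdegx hdegy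
    hverts.ge harcs.ge)⟩
  have hn : D'.n + 1 + 1 = D.n := by
    rw [n, n, hverts, Finset.card_erase_add_one (by simp [hxy.ne.symm, (D.wf _ hxy.1).2.1]),
      Finset.card_erase_add_one (D.wf _ hxy.1).1]
  have hm : D'.m ≤ (D.arcsAvoiding x y).card + 2 := by
    rw [m, harcs]
    exact (Finset.card_union_le _ _).trans (Nat.add_le_add_left Finset.card_le_two _)
  have hdeg := card_arcsAvoiding_add_degree_add_degree_le (D := D) hxy.ne
  have hpi := piNum_add_one_le_of_contraction hwy hxz hwx hxy hyz harcs.le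
  simp only [potential]
  omega
end

section
/- Let k ≥ 2 and let D₁ and D₂ be k-dicritical oriented graphs on disjoint vertex sets. Then △(1, D₁, D₂) is (k+1)-dicritical, where △(1, D₁, D₂) is obtained from the disjoint union of D₁ and D₂ by adding a new vertex u₀ together with all arcs from u₀ to V(D₁), all arcs from V(D₁) to V(D₂), and all arcs from V(D₂) to u₀. -/
namespace Digraph'

variable {V : Type*} [DecidableEq V]

/-!
Every directed cycle of `△(1, D₁, D₂)` lies in `D₁`, lies in `D₂`, or passes through `u₀`; in
the last case it uses an arc `u₀ → D₁`, an arc `D₁ → D₂` and an arc `D₂ → u₀`.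

Colouring `D₁` and `D₂` with `k` colours and `u₀` with a new one gives `χ⃗ ≤ k + 1`. In a
`k`-dicolouring, dicriticality of `D₁` and `D₂` forces the colour of `u₀` to occur in both, which
yields a monochromatic directed triangle. A proper subdigraph misses some arc `a`. Depending on
where `a` lies, take a `(k-1)`-dicolouring of `D₁ - a` or of `D₁ - y` (with `y` given the extra
colour), and likewise for `D₂`, and give `u₀` the extra colour: the only cycles that could be
monochromatic pass through `u₀`, and deleting `a` breaks them.
-/

lemma mem_of_mem_cyclicArcs_s18 {l : List V} {p : V × V} (h : p ∈ cyclicArcs l) :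
    p.1 ∈ l ∧ p.2 ∈ l := by
  rw [cyclicArcs, List.mem_toFinset] at h
  obtain ⟨h1, h2⟩ := List.of_mem_zip (a := p.1) (b := p.2) (by simpa using h)
  exact ⟨h1, List.mem_rotate.mp h2⟩

lemma getElem_mem_cyclicArcs (l : List V) {i : ℕ} (hi : i < l.length) :
    (l[i], l[(i + 1) % l.length]'(Nat.mod_lt _ (by omega))) ∈ cyclicArcs l := by
  rw [cyclicArcs, List.mem_toFinset, List.mem_iff_getElem]
  exact ⟨i, by simpa using hi, by simp [List.getElem_rotate]⟩

lemma exists_mem_cyclicArcs_fst {l : List V} {v : V} (h : v ∈ l) :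
    ∃ w ∈ l, (v, w) ∈ cyclicArcs l := by
  obtain ⟨i, hi, rfl⟩ := List.getElem_of_mem h
  exact ⟨_, List.getElem_mem _, getElem_mem_cyclicArcs l hi⟩

lemma exists_mem_cyclicArcs_snd {l : List V} {v : V} (h : v ∈ l) :
    ∃ u ∈ l, (u, v) ∈ cyclicArcs l := by
  obtain ⟨i, hi, rfl⟩ := List.getElem_of_mem h
  have hpred := getElem_mem_cyclicArcs l (Nat.mod_lt (i + l.length - 1) (by omega))
  refine ⟨_, List.getElem_mem (Nat.mod_lt (i + l.length - 1) (by omega)), ?_⟩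
  convert hpred using 3
  rw [Nat.mod_add_mod, show i + l.length - 1 + 1 = i + l.length by omega,
    Nat.add_mod_right, Nat.mod_eq_of_lt hi]

lemma exists_cyclicArcs_leaving {l : List V} {A : Set V} {v w : V}
    (hv : v ∈ l) (hvA : v ∈ A) (hw : w ∈ l) (hwA : w ∉ A) :
    ∃ p ∈ cyclicArcs l, p.1 ∈ A ∧ p.2 ∉ A := by
  by_contra! hclosed
  obtain ⟨i, hi, rfl⟩ := List.getElem_of_mem hv
  obtain ⟨j, hj, rfl⟩ := List.getElem_of_mem hw
  have hreach : ∀ t, l[(i + t) % l.length]'(Nat.mod_lt _ (by omega)) ∈ A := by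
    intro t
    induction t with
    | zero => simpa [Nat.mod_eq_of_lt hi] using hvA
    | succ t ih =>
      simpa [Nat.mod_add_mod, add_assoc] using
        hclosed _ (getElem_mem_cyclicArcs l (Nat.mod_lt (i + t) (by omega))) ih
  apply hwA
  convert hreach (l.length - i + j) using 2
  rw [show i + (l.length - i + j) = j + l.length by omega, Nat.add_mod_right,
    Nat.mod_eq_of_lt hj]

def IsCycle (D : Digraph' V) (l : List V) : Prop :=
  l.Nodup ∧ 2 ≤ l.length ∧ cyclicArcs l ⊆ D.arcs

section Cycles

variable {D H : Digraph' V} {l : List V}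

lemma IsCycle.mem_verts (hl : D.IsCycle l) {v : V} (hv : v ∈ l) : v ∈ D.verts := by
  obtain ⟨w, -, hvw⟩ := exists_mem_cyclicArcs_fst hv
  exact (D.wf _ (hl.2.2 hvw)).1

lemma IsCycle.exists_ne (hl : D.IsCycle l) (v : V) : ∃ w ∈ l, w ≠ v := by
  by_contra! h
  have hrep := List.eq_replicate_iff.2 ⟨rfl, h⟩
  have := hl.2.1
  have := List.nodup_replicate.1 (hrep ▸ hl.1)
  omega

lemma IsCycle.exists_mem (hl : D.IsCycle l) : ∃ v, v ∈ l :=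
  List.length_pos_iff_exists_mem.1 (by have := hl.2.1; omega)

lemma IsCycle.of_arcs (hl : D.IsCycle l)
    (h : ∀ a ∈ D.arcs, a.1 ∈ l → a.2 ∈ l → a ∈ H.arcs) : H.IsCycle l :=
  ⟨hl.1, hl.2.1, fun a ha =>
    h a (hl.2.2 ha) (mem_of_mem_cyclicArcs_s18 ha).1 (mem_of_mem_cyclicArcs_s18 ha).2⟩

end Cycles

section Dicolourings

variable {D H : Digraph' V} {j k : ℕ} {φ : V → Fin k}

theorem isDicolouring_iff :
    D.IsDicolouring k φ ↔ ∀ l, D.IsCycle l → ∃ v ∈ l, ∃ w ∈ l, φ v ≠ φ w := by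
  constructor
  · intro h l hl
    by_contra! hmono
    obtain ⟨v₀, hv₀⟩ := hl.exists_mem
    exact h (φ v₀) ⟨l, hl.1, hl.2.1,
      fun v hv => Finset.mem_filter.2 ⟨hl.mem_verts hv, hmono v hv v₀ hv₀⟩, hl.2.2⟩
  · rintro h i ⟨l, hnd, hlen, hmem, harcs⟩
    obtain ⟨v, hv, w, hw, hne⟩ := h l ⟨hnd, hlen, harcs⟩
    exact hne ((Finset.mem_filter.1 (hmem v hv)).2.trans (Finset.mem_filter.1 (hmem w hw)).2.symm)

lemma IsDicolouring.of_refines (hφ : D.IsDicolouring k φ) (ψ : V → Fin j)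
    (hψ : ∀ v ∈ D.verts, ∀ w ∈ D.verts, ψ v = ψ w → φ v = φ w) : D.IsDicolouring j ψ := by
  rw [isDicolouring_iff] at hφ ⊢
  intro l hl
  obtain ⟨v, hv, w, hw, hne⟩ := hφ l hl
  exact ⟨v, hv, w, hw, fun h => hne (hψ v (hl.mem_verts hv) w (hl.mem_verts hw) h)⟩

lemma IsDicolouring.of_arcs_subset (hφ : D.IsDicolouring k φ) (h : H.arcs ⊆ D.arcs) :
    H.IsDicolouring k φ := by
  rw [isDicolouring_iff] at hφ ⊢
  exact fun l hl => hφ l ⟨hl.1, hl.2.1, hl.2.2.trans h⟩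

lemma IsDicolouring.castSucc (hφ : D.IsDicolouring k φ) :
    D.IsDicolouring (k + 1) fun v => (φ v).castSucc :=
  hφ.of_refines _ fun _ _ _ _ h => Fin.castSucc_injective _ h

lemma IsDicolouring.extend_of_delVert {v : V} {α : V → Fin j}
    (hα : (D.delVert v).IsDicolouring j α) :
    D.IsDicolouring (j + 1) fun w => if w = v then Fin.last j else (α w).castSucc := by
  rw [isDicolouring_iff] at hα ⊢
  intro l hl
  by_cases hv : v ∈ l
  · obtain ⟨w, hw, hwv⟩ := hl.exists_ne v
    exact ⟨v, hv, w, hw, by simpa [hwv] using (Fin.castSucc_ne_last (α w)).symm⟩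
  · obtain ⟨x, hx, y, hy, hne⟩ := hα l <| hl.of_arcs fun a ha h1 h2 =>
      Finset.mem_filter.2 ⟨ha, ne_of_mem_of_not_mem h1 hv, ne_of_mem_of_not_mem h2 hv⟩
    exact ⟨x, hx, y, hy, by simpa [ne_of_mem_of_not_mem hx hv, ne_of_mem_of_not_mem hy hv]⟩

lemma IsDicolouring.dicolourable_of_forall_ne {m : ℕ} (hm : 0 < m) {φ : V → Fin (m + 1)}
    (hφ : D.IsDicolouring (m + 1) φ) {i : Fin (m + 1)} (hi : ∀ v ∈ D.verts, φ v ≠ i) :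
    D.Dicolourable m := by
  have hsome : ∀ v ∈ D.verts, finSuccEquiv' i (φ v) ≠ none := fun v hv h =>
    hi v hv ((finSuccEquiv' i).injective (h.trans (finSuccEquiv'_at i).symm))
  refine ⟨fun v => (finSuccEquiv' i (φ v)).getD ⟨0, hm⟩, hφ.of_refines _ fun v hv w hw h => ?_⟩
  apply (finSuccEquiv' i).injective
  rw [← Option.getD_of_ne_none (hsome v hv) ⟨0, hm⟩, ← Option.getD_of_ne_none (hsome w hw) ⟨0, hm⟩,
    h]

lemma dicolourable_card_add_one (D : Digraph' V) : D.Dicolourable (D.verts.card + 1) := by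
  let e := D.verts.equivFin
  refine ⟨fun v => if h : v ∈ D.verts then (e ⟨v, h⟩).castSucc else 0,
    isDicolouring_iff.2 fun l hl => ?_⟩
  obtain ⟨v, hv⟩ := hl.exists_mem
  obtain ⟨w, hw, hwv⟩ := hl.exists_ne v
  refine ⟨v, hv, w, hw, ?_⟩
  simp [hl.mem_verts hv, hl.mem_verts hw, hwv.symm]

lemma Dicolourable.mono (hjk : j ≤ k) (h : D.Dicolourable j) : D.Dicolourable k :=
  let ⟨φ, hφ⟩ := h
  ⟨_, hφ.of_refines (fun v => Fin.castLE hjk (φ v)) fun _ _ _ _ h => Fin.castLE_injective hjk h⟩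

lemma dicolourable_iff_dichromatic_le : D.Dicolourable k ↔ D.dichromatic ≤ k :=
  ⟨fun h => Nat.sInf_le h, fun h => Dicolourable.mono h
    (Nat.sInf_mem (⟨_, dicolourable_card_add_one D⟩ : Set.Nonempty {k | D.Dicolourable k}))⟩

lemma IsDicolouring.exists_mem_eq_of_dichromatic_eq (hφ : D.IsDicolouring k φ)
    (hD : D.dichromatic = k) (hk : 2 ≤ k) (i : Fin k) : ∃ v ∈ D.verts, φ v = i := by
  obtain ⟨m, rfl⟩ : ∃ m, k = m + 1 := ⟨k - 1, by omega⟩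
  by_contra! hi
  have := dicolourable_iff_dichromatic_le.1 (hφ.dicolourable_of_forall_ne (by omega) hi)
  omega

lemma verts_nonempty_of_one_lt_dichromatic (hD : 1 < D.dichromatic) : D.verts.Nonempty := by
  by_contra! h
  have : D.Dicolourable 1 := ⟨fun _ => 0, isDicolouring_iff.2 fun l hl => by
    obtain ⟨v, hv⟩ := hl.exists_mem
    simpa [h] using hl.mem_verts hv⟩
  have := dicolourable_iff_dichromatic_le.1 this
  omega

end Dicolourings

section Dicritical

variable {D H : Digraph' V} {k : ℕ}

lemma Dicritical.dicolourable (h : D.Dicritical k) : D.Dicolourable k :=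
  dicolourable_iff_dichromatic_le.2 h.1.le

lemma Dicritical.dicolourable_of_isProperSubdigraph (h : D.Dicritical (k + 1))
    (hH : H.IsProperSubdigraph D) : H.Dicolourable k :=
  dicolourable_iff_dichromatic_le.2 (h.2 H hH)

lemma Dicritical.dicolourable_eraseArc (h : D.Dicritical (k + 1)) {a : V × V}
    (ha : a ∈ D.arcs) : (D.eraseArc a).Dicolourable k :=
  h.dicolourable_of_isProperSubdigraph
    ⟨⟨subset_rfl, Finset.erase_subset _ _⟩, Or.inr (Finset.erase_ne_self.2 ha)⟩

lemma Dicritical.dicolourable_delVert (h : D.Dicritical (k + 1)) {v : V}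
    (hv : v ∈ D.verts) : (D.delVert v).Dicolourable k :=
  h.dicolourable_of_isProperSubdigraph
    ⟨⟨Finset.erase_subset _ _, Finset.filter_subset _ _⟩, Or.inl (Finset.erase_ne_self.2 hv)⟩

lemma IsProperSubdigraph.exists_mem_arcs_not_mem (hH : H.IsProperSubdigraph D)
    (hcov : ∀ v ∈ D.verts, ∃ a ∈ D.arcs, a.1 = v ∨ a.2 = v) : ∃ a ∈ D.arcs, a ∉ H.arcs := by
  by_contra! h
  have harcs : H.arcs = D.arcs := hH.1.2.antisymm h
  refine hH.2.elim (fun hv => hv (hH.1.1.antisymm fun v hv => ?_)) (· harcs)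
  obtain ⟨a, ha, rfl | rfl⟩ := hcov v hv
  · exact (H.wf a (harcs ▸ ha)).1
  · exact (H.wf a (harcs ▸ ha)).2.1

end Dicritical

/-- `D` is `△(1, D₁, D₂)` with apex `u₀`. -/
structure IsTriangleJoin (D₁ D₂ D : Digraph' V) (u₀ : V) : Prop where
  disjoint : Disjoint D₁.verts D₂.verts
  not_mem_left : u₀ ∉ D₁.verts
  not_mem_right : u₀ ∉ D₂.verts
  verts_eq : D.verts = insert u₀ (D₁.verts ∪ D₂.verts)
  arcs_eq : D.arcs = D₁.arcs ∪ D₂.arcs ∪ D₁.verts.image (fun v => (u₀, v)) ∪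
    (D₁.verts ×ˢ D₂.verts) ∪ D₂.verts.image (fun v => (v, u₀))

def joinColouring (D₁ D₂ : Digraph' V) {j : ℕ} (φ₁ φ₂ : V → Fin (j + 1)) : V → Fin (j + 1) :=
  fun v => if v ∈ D₁.verts then φ₁ v else if v ∈ D₂.verts then φ₂ v else Fin.last j

namespace IsTriangleJoin

variable {D₁ D₂ D : Digraph' V} {u₀ : V}

lemma mem_verts (hT : IsTriangleJoin D₁ D₂ D u₀) {v : V} :
    v ∈ D.verts ↔ v = u₀ ∨ v ∈ D₁.verts ∨ v ∈ D₂.verts := by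
  simp [hT.verts_eq]

lemma mem_arcs (hT : IsTriangleJoin D₁ D₂ D u₀) {a : V × V} :
    a ∈ D.arcs ↔ a ∈ D₁.arcs ∨ a ∈ D₂.arcs ∨ (a.1 = u₀ ∧ a.2 ∈ D₁.verts) ∨
      (a.1 ∈ D₁.verts ∧ a.2 ∈ D₂.verts) ∨ (a.1 ∈ D₂.verts ∧ a.2 = u₀) := by
  obtain ⟨x, y⟩ := a
  simp only [hT.arcs_eq, Finset.mem_union, Finset.mem_image, Finset.mem_product, Prod.mk.injEq]
  aesop

lemma mem_left_of_mem_arcs (hT : IsTriangleJoin D₁ D₂ D u₀) {y : V} (h : (u₀, y) ∈ D.arcs) :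
    y ∈ D₁.verts := by
  have := (D.wf _ h).2.2; have := hT.not_mem_left; have := hT.not_mem_right
  have := D₁.wf (u₀, y); have := D₂.wf (u₀, y)
  rcases hT.mem_arcs.1 h with h | h | h | h | h <;> grind

lemma mem_right_of_mem_arcs (hT : IsTriangleJoin D₁ D₂ D u₀) {x : V} (h : (x, u₀) ∈ D.arcs) :
    x ∈ D₂.verts := by
  have := (D.wf _ h).2.2; have := hT.not_mem_left; have := hT.not_mem_right
  have := D₁.wf (x, u₀); have := D₂.wf (x, u₀)
  rcases hT.mem_arcs.1 h with h | h | h | h | h <;> grind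

lemma snd_mem_of_fst_mem_left (hT : IsTriangleJoin D₁ D₂ D u₀) {a : V × V} (ha : a ∈ D.arcs)
    (h₁ : a.1 ∈ D₁.verts) : a.2 ∈ D₁.verts ∨ a.2 ∈ D₂.verts := by
  have := hT.not_mem_left; have := Finset.disjoint_left.1 hT.disjoint
  rcases hT.mem_arcs.1 ha with h | h | h | h | h <;> grind [Digraph'.wf]

lemma snd_mem_of_fst_mem_right (hT : IsTriangleJoin D₁ D₂ D u₀) {a : V × V} (ha : a ∈ D.arcs)
    (h₂ : a.1 ∈ D₂.verts) : a.2 ∈ D₂.verts ∨ a.2 = u₀ := by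
  have := hT.not_mem_right; have := Finset.disjoint_left.1 hT.disjoint
  rcases hT.mem_arcs.1 ha with h | h | h | h | h <;> grind [Digraph'.wf]

lemma mem_left_arcs (hT : IsTriangleJoin D₁ D₂ D u₀) {a : V × V} (ha : a ∈ D.arcs)
    (h₁ : a.1 ∈ D₁.verts) (h₂ : a.2 ∈ D₁.verts) : a ∈ D₁.arcs := by
  have := hT.not_mem_left; have := Finset.disjoint_left.1 hT.disjoint
  rcases hT.mem_arcs.1 ha with h | h | h | h | h <;> grind [Digraph'.wf]

lemma mem_right_arcs (hT : IsTriangleJoin D₁ D₂ D u₀) {a : V × V} (ha : a ∈ D.arcs)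
    (h₁ : a.1 ∈ D₂.verts) (h₂ : a.2 ∈ D₂.verts) : a ∈ D₂.arcs := by
  have := hT.not_mem_right; have := Finset.disjoint_left.1 hT.disjoint
  rcases hT.mem_arcs.1 ha with h | h | h | h | h <;> grind [Digraph'.wf]


lemma left_arcs_subset (hT : IsTriangleJoin D₁ D₂ D u₀) : D₁.arcs ⊆ D.arcs :=
  fun _ ha => hT.mem_arcs.2 (Or.inl ha)

lemma right_arcs_subset (hT : IsTriangleJoin D₁ D₂ D u₀) : D₂.arcs ⊆ D.arcs :=
  fun _ ha => hT.mem_arcs.2 (Or.inr (Or.inl ha))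

lemma isCycle_triangle (hT : IsTriangleJoin D₁ D₂ D u₀) {v₁ v₂ : V} (hv₁ : v₁ ∈ D₁.verts)
    (hv₂ : v₂ ∈ D₂.verts) : D.IsCycle [u₀, v₁, v₂] := by
  have hne₁ : u₀ ≠ v₁ := fun h => hT.not_mem_left (h ▸ hv₁)
  have hne₂ : u₀ ≠ v₂ := fun h => hT.not_mem_right (h ▸ hv₂)
  have hne₁₂ : v₁ ≠ v₂ := fun h => Finset.disjoint_left.1 hT.disjoint hv₁ (h ▸ hv₂)
  have harcs : cyclicArcs [u₀, v₁, v₂] = {(u₀, v₁), (v₁, v₂), (v₂, u₀)} := by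
    simp [cyclicArcs, List.rotate]
  refine ⟨by simp [hne₁, hne₂, hne₁₂], by simp, fun a ha => hT.mem_arcs.2 ?_⟩
  simp only [harcs, Finset.mem_insert, Finset.mem_singleton] at ha
  rcases ha with rfl | rfl | rfl <;> simp [hv₁, hv₂]

lemma exists_mem_arcs_of_mem_verts (hT : IsTriangleJoin D₁ D₂ D u₀) (hD₁ : D₁.verts.Nonempty)
    {v : V} (hv : v ∈ D.verts) : ∃ a ∈ D.arcs, a.1 = v ∨ a.2 = v := by
  rcases hT.mem_verts.1 hv with rfl | hv | hv
  · obtain ⟨y, hy⟩ := hD₁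
    exact ⟨(v, y), hT.mem_arcs.2 (by simp [hy]), Or.inl rfl⟩
  · exact ⟨(u₀, v), hT.mem_arcs.2 (by simp [hv]), Or.inr rfl⟩
  · exact ⟨(v, u₀), hT.mem_arcs.2 (by simp [hv]), Or.inl rfl⟩

lemma forall_mem_left_or_forall_mem_right (hT : IsTriangleJoin D₁ D₂ D u₀) {l : List V}
    (hl : D.IsCycle l) (hu : u₀ ∉ l) : (∀ v ∈ l, v ∈ D₁.verts) ∨ ∀ v ∈ l, v ∈ D₂.verts := by
  by_contra! h
  obtain ⟨⟨v, hv, hv₁⟩, ⟨w, hw, hw₂⟩⟩ := h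
  have hv₂ : v ∈ D₂.verts := by
    rcases hT.mem_verts.1 (hl.mem_verts hv) with rfl | h | h
    exacts [absurd hv hu, absurd h hv₁, h]
  obtain ⟨a, ha, ha₁, ha₂⟩ := exists_cyclicArcs_leaving (A := D₂.verts) hv hv₂ hw hw₂
  rcases hT.snd_mem_of_fst_mem_right (hl.2.2 ha) ha₁ with h | h
  · exact ha₂ h
  · exact hu (h ▸ (mem_of_mem_cyclicArcs_s18 ha).2)

lemma exists_mem_cyclicArcs_cross (hT : IsTriangleJoin D₁ D₂ D u₀) {l : List V}
    (hl : D.IsCycle l) (hu : u₀ ∈ l) :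
    ∃ a ∈ cyclicArcs l, a.1 ∈ D₁.verts ∧ a.2 ∈ D₂.verts := by
  obtain ⟨x, hx, hxu⟩ := exists_mem_cyclicArcs_snd hu
  have hx₂ := hT.mem_right_of_mem_arcs (hl.2.2 hxu)
  have hxA : x ∉ {v | v = u₀ ∨ v ∈ D₁.verts} := by
    rintro (rfl | hx₁)
    exacts [hT.not_mem_right hx₂, Finset.disjoint_left.1 hT.disjoint hx₁ hx₂]
  obtain ⟨⟨p, q⟩, hpq, hp, hq⟩ := exists_cyclicArcs_leaving hu (Or.inl rfl) hx hxA
  simp only [Set.mem_ofPred_eq, not_or] at hp hq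
  rcases hp with rfl | hp
  · exact absurd (hT.mem_left_of_mem_arcs (hl.2.2 hpq)) hq.2
  · exact ⟨_, hpq, hp, (hT.snd_mem_of_fst_mem_left (hl.2.2 hpq) hp).resolve_left hq.2⟩

lemma joinColouring_of_mem_left {j : ℕ} {φ₁ φ₂ : V → Fin (j + 1)} {v : V} (hv : v ∈ D₁.verts) :
    joinColouring D₁ D₂ φ₁ φ₂ v = φ₁ v := if_pos hv

lemma joinColouring_of_mem_right (hT : IsTriangleJoin D₁ D₂ D u₀) {j : ℕ}
    {φ₁ φ₂ : V → Fin (j + 1)} {v : V} (hv : v ∈ D₂.verts) :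
    joinColouring D₁ D₂ φ₁ φ₂ v = φ₂ v := by
  simp [joinColouring, hv, Finset.disjoint_right.1 hT.disjoint hv]

lemma joinColouring_apex (hT : IsTriangleJoin D₁ D₂ D u₀) {j : ℕ} {φ₁ φ₂ : V → Fin (j + 1)} :
    joinColouring D₁ D₂ φ₁ φ₂ u₀ = Fin.last j := by
  simp [joinColouring, hT.not_mem_left, hT.not_mem_right]

/-- Every cycle through `u₀` uses an arc `u₀ → D₁`, an arc `D₂ → u₀` and an arc `D₁ → D₂`, so
`hlink` (one of these three kinds of arcs never joins two vertices of the colour of `u₀`) rules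
out monochromatic cycles through `u₀`. -/
theorem isDicolouring_joinColouring (hT : IsTriangleJoin D₁ D₂ D u₀) {G H₁ H₂ : Digraph' V}
    (hG : G.arcs ⊆ D.arcs)
    (hG₁ : ∀ a ∈ G.arcs, a.1 ∈ D₁.verts → a.2 ∈ D₁.verts → a ∈ H₁.arcs)
    (hG₂ : ∀ a ∈ G.arcs, a.1 ∈ D₂.verts → a.2 ∈ D₂.verts → a ∈ H₂.arcs)
    {j : ℕ} {φ₁ φ₂ : V → Fin (j + 1)}
    (hφ₁ : H₁.IsDicolouring (j + 1) φ₁) (hφ₂ : H₂.IsDicolouring (j + 1) φ₂)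
    (hlink : (∀ y, (u₀, y) ∈ G.arcs → φ₁ y ≠ Fin.last j) ∨
      (∀ x, (x, u₀) ∈ G.arcs → φ₂ x ≠ Fin.last j) ∨
      (∀ a ∈ G.arcs, a.1 ∈ D₁.verts → a.2 ∈ D₂.verts →
        φ₁ a.1 ≠ Fin.last j ∨ φ₂ a.2 ≠ Fin.last j)) :
    G.IsDicolouring (j + 1) (joinColouring D₁ D₂ φ₁ φ₂) := by
  rw [isDicolouring_iff] at hφ₁ hφ₂ ⊢
  intro l hl
  have hlD : D.IsCycle l := ⟨hl.1, hl.2.1, hl.2.2.trans hG⟩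
  by_cases hu : u₀ ∈ l
  · by_contra! hmono
    have hlast : ∀ v ∈ l, joinColouring D₁ D₂ φ₁ φ₂ v = Fin.last j :=
      fun v hv => (hmono v hv u₀ hu).trans hT.joinColouring_apex
    have hlast₁ : ∀ v ∈ l, v ∈ D₁.verts → φ₁ v = Fin.last j :=
      fun v hv h => (joinColouring_of_mem_left h).symm.trans (hlast v hv)
    have hlast₂ : ∀ v ∈ l, v ∈ D₂.verts → φ₂ v = Fin.last j :=
      fun v hv h => (hT.joinColouring_of_mem_right h).symm.trans (hlast v hv)
    obtain ⟨y, hyl, hy⟩ := exists_mem_cyclicArcs_fst hu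
    obtain ⟨x, hxl, hx⟩ := exists_mem_cyclicArcs_snd hu
    obtain ⟨a, ha, ha₁, ha₂⟩ := hT.exists_mem_cyclicArcs_cross hlD hu
    rcases hlink with h | h | h
    · exact h y (hl.2.2 hy) (hlast₁ y hyl (hT.mem_left_of_mem_arcs (hlD.2.2 hy)))
    · exact h x (hl.2.2 hx) (hlast₂ x hxl (hT.mem_right_of_mem_arcs (hlD.2.2 hx)))
    · exact (h a (hl.2.2 ha) ha₁ ha₂).elim (· (hlast₁ _ (mem_of_mem_cyclicArcs_s18 ha).1 ha₁))
        (· (hlast₂ _ (mem_of_mem_cyclicArcs_s18 ha).2 ha₂))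
  · rcases hT.forall_mem_left_or_forall_mem_right hlD hu with hl₁ | hl₂
    · obtain ⟨v, hv, w, hw, hne⟩ := hφ₁ l <|
        hl.of_arcs fun a ha h1 h2 => hG₁ a ha (hl₁ _ h1) (hl₁ _ h2)
      refine ⟨v, hv, w, hw, ?_⟩
      rwa [joinColouring_of_mem_left (hl₁ v hv), joinColouring_of_mem_left (hl₁ w hw)]
    · obtain ⟨v, hv, w, hw, hne⟩ := hφ₂ l <|
        hl.of_arcs fun a ha h1 h2 => hG₂ a ha (hl₂ _ h1) (hl₂ _ h2)
      refine ⟨v, hv, w, hw, ?_⟩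
      rwa [hT.joinColouring_of_mem_right (hl₂ v hv), hT.joinColouring_of_mem_right (hl₂ w hw)]

theorem dicolourable_succ (hT : IsTriangleJoin D₁ D₂ D u₀) {k : ℕ} (h₁ : D₁.Dicolourable k)
    (h₂ : D₂.Dicolourable k) : D.Dicolourable (k + 1) := by
  obtain ⟨ψ₁, hψ₁⟩ := h₁
  obtain ⟨ψ₂, hψ₂⟩ := h₂
  exact ⟨_, hT.isDicolouring_joinColouring subset_rfl (fun _ ha => hT.mem_left_arcs ha)
    (fun _ ha => hT.mem_right_arcs ha) hψ₁.castSucc hψ₂.castSucc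
    (Or.inl fun y _ => Fin.castSucc_ne_last (ψ₁ y))⟩

theorem isDicolouring_eraseArc_joinColouring (hT : IsTriangleJoin D₁ D₂ D u₀) {a : V × V}
    {j : ℕ} {φ₁ φ₂ : V → Fin (j + 1)}
    (hφ₁ : (D₁.eraseArc a).IsDicolouring (j + 1) φ₁)
    (hφ₂ : (D₂.eraseArc a).IsDicolouring (j + 1) φ₂)
    (hlink : (∀ y, (u₀, y) ≠ a → y ∈ D₁.verts → φ₁ y ≠ Fin.last j) ∨
      (∀ x, (x, u₀) ≠ a → x ∈ D₂.verts → φ₂ x ≠ Fin.last j) ∨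
      (∀ b ≠ a, b.1 ∈ D₁.verts → b.2 ∈ D₂.verts → φ₁ b.1 ≠ Fin.last j ∨ φ₂ b.2 ≠ Fin.last j)) :
    (D.eraseArc a).IsDicolouring (j + 1) (joinColouring D₁ D₂ φ₁ φ₂) := by
  refine hT.isDicolouring_joinColouring (Finset.erase_subset _ _)
    (fun b hb h1 h2 => Finset.mem_erase.2
      ⟨Finset.ne_of_mem_erase hb, hT.mem_left_arcs (Finset.mem_of_mem_erase hb) h1 h2⟩)
    (fun b hb h1 h2 => Finset.mem_erase.2
      ⟨Finset.ne_of_mem_erase hb, hT.mem_right_arcs (Finset.mem_of_mem_erase hb) h1 h2⟩)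
    hφ₁ hφ₂ ?_
  rcases hlink with h | h | h
  · exact Or.inl fun y hy => h y (Finset.ne_of_mem_erase hy)
      (hT.mem_left_of_mem_arcs (Finset.mem_of_mem_erase hy))
  · exact Or.inr <| Or.inl fun x hx => h x (Finset.ne_of_mem_erase hx)
      (hT.mem_right_of_mem_arcs (Finset.mem_of_mem_erase hx))
  · exact Or.inr <| Or.inr fun b hb => h b (Finset.ne_of_mem_erase hb)

theorem dicolourable_eraseArc_of_left (hT : IsTriangleJoin D₁ D₂ D u₀) {a : V × V} {j : ℕ}
    (h₁ : (D₁.eraseArc a).Dicolourable j) (h₂ : D₂.Dicolourable (j + 1)) :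
    (D.eraseArc a).Dicolourable (j + 1) := by
  obtain ⟨α, hα⟩ := h₁
  obtain ⟨ψ, hψ⟩ := h₂
  exact ⟨_, hT.isDicolouring_eraseArc_joinColouring hα.castSucc
    (hψ.of_arcs_subset (Finset.erase_subset _ _))
    (Or.inl fun y _ _ => Fin.castSucc_ne_last (α y))⟩

theorem dicolourable_eraseArc_of_right (hT : IsTriangleJoin D₁ D₂ D u₀) {a : V × V} {j : ℕ}
    (h₁ : D₁.Dicolourable (j + 1)) (h₂ : (D₂.eraseArc a).Dicolourable j) :
    (D.eraseArc a).Dicolourable (j + 1) := by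
  obtain ⟨ψ, hψ⟩ := h₁
  obtain ⟨α, hα⟩ := h₂
  exact ⟨_, hT.isDicolouring_eraseArc_joinColouring
    (hψ.of_arcs_subset (Finset.erase_subset _ _)) hα.castSucc
    (Or.inr <| Or.inl fun x _ _ => Fin.castSucc_ne_last (α x))⟩

theorem dicolourable_eraseArc_apex_left (hT : IsTriangleJoin D₁ D₂ D u₀) {y₀ : V} {j : ℕ}
    (h₁ : (D₁.delVert y₀).Dicolourable j) (h₂ : D₂.Dicolourable (j + 1)) :
    (D.eraseArc (u₀, y₀)).Dicolourable (j + 1) := by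
  obtain ⟨α, hα⟩ := h₁
  obtain ⟨ψ, hψ⟩ := h₂
  refine ⟨_, hT.isDicolouring_eraseArc_joinColouring
    (hα.extend_of_delVert.of_arcs_subset (Finset.erase_subset _ _))
    (hψ.of_arcs_subset (Finset.erase_subset _ _)) (Or.inl fun y hy _ => ?_)⟩
  simp [show y ≠ y₀ by rintro rfl; exact hy rfl]

theorem dicolourable_eraseArc_right_apex (hT : IsTriangleJoin D₁ D₂ D u₀) {x₀ : V} {j : ℕ}
    (h₁ : D₁.Dicolourable (j + 1)) (h₂ : (D₂.delVert x₀).Dicolourable j) :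
    (D.eraseArc (x₀, u₀)).Dicolourable (j + 1) := by
  obtain ⟨ψ, hψ⟩ := h₁
  obtain ⟨α, hα⟩ := h₂
  refine ⟨_, hT.isDicolouring_eraseArc_joinColouring
    (hψ.of_arcs_subset (Finset.erase_subset _ _))
    (hα.extend_of_delVert.of_arcs_subset (Finset.erase_subset _ _))
    (Or.inr <| Or.inl fun x hx _ => ?_)⟩
  simp [show x ≠ x₀ by rintro rfl; exact hx rfl]

theorem dicolourable_eraseArc_left_right (hT : IsTriangleJoin D₁ D₂ D u₀) {x₀ y₀ : V} {j : ℕ}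
    (h₁ : (D₁.delVert x₀).Dicolourable j) (h₂ : (D₂.delVert y₀).Dicolourable j) :
    (D.eraseArc (x₀, y₀)).Dicolourable (j + 1) := by
  obtain ⟨α, hα⟩ := h₁
  obtain ⟨β, hβ⟩ := h₂
  refine ⟨_, hT.isDicolouring_eraseArc_joinColouring
    (hα.extend_of_delVert.of_arcs_subset (Finset.erase_subset _ _))
    (hβ.extend_of_delVert.of_arcs_subset (Finset.erase_subset _ _))
    (Or.inr <| Or.inr fun b hb _ _ => ?_)⟩
  by_cases hx : b.1 = x₀
  · have hy : b.2 ≠ y₀ := fun hy => hb (Prod.ext hx hy)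
    simp [hy]
  · simp [hx]

theorem dicolourable_eraseArc (hT : IsTriangleJoin D₁ D₂ D u₀) {j : ℕ}
    (h₁ : D₁.Dicritical (j + 1)) (h₂ : D₂.Dicritical (j + 1)) {a : V × V} (ha : a ∈ D.arcs) :
    (D.eraseArc a).Dicolourable (j + 1) := by
  obtain ⟨x, y⟩ := a
  rcases hT.mem_arcs.1 ha with ha | ha | ⟨rfl, hy⟩ | ⟨hx, hy⟩ | ⟨hx, rfl⟩
  · exact hT.dicolourable_eraseArc_of_left (h₁.dicolourable_eraseArc ha) h₂.dicolourable
  · exact hT.dicolourable_eraseArc_of_right h₁.dicolourable (h₂.dicolourable_eraseArc ha)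
  · exact hT.dicolourable_eraseArc_apex_left (h₁.dicolourable_delVert hy) h₂.dicolourable
  · exact hT.dicolourable_eraseArc_left_right (h₁.dicolourable_delVert hx)
      (h₂.dicolourable_delVert hy)
  · exact hT.dicolourable_eraseArc_right_apex h₁.dicolourable (h₂.dicolourable_delVert hx)

theorem not_dicolourable (hT : IsTriangleJoin D₁ D₂ D u₀) {k : ℕ} (hk : 2 ≤ k)
    (h₁ : D₁.dichromatic = k) (h₂ : D₂.dichromatic = k) : ¬ D.Dicolourable k := by
  rintro ⟨φ, hφ⟩
  obtain ⟨v₁, hv₁, hc₁⟩ :=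
    (hφ.of_arcs_subset hT.left_arcs_subset).exists_mem_eq_of_dichromatic_eq h₁ hk (φ u₀)
  obtain ⟨v₂, hv₂, hc₂⟩ :=
    (hφ.of_arcs_subset hT.right_arcs_subset).exists_mem_eq_of_dichromatic_eq h₂ hk (φ u₀)
  obtain ⟨v, hv, w, hw, hne⟩ := isDicolouring_iff.1 hφ _ (hT.isCycle_triangle hv₁ hv₂)
  have hmono : ∀ u ∈ [u₀, v₁, v₂], φ u = φ u₀ := by simp [hc₁, hc₂]
  exact hne ((hmono v hv).trans (hmono w hw).symm)

theorem dicritical (hT : IsTriangleJoin D₁ D₂ D u₀) {k : ℕ} (hk : 2 ≤ k)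
    (h₁ : D₁.Dicritical k) (h₂ : D₂.Dicritical k) : D.Dicritical (k + 1) := by
  obtain ⟨j, rfl⟩ : ∃ j, k = j + 1 := ⟨k - 1, by omega⟩
  have hupper := dicolourable_iff_dichromatic_le.1
    (hT.dicolourable_succ h₁.dicolourable h₂.dicolourable)
  have hlower : ¬ D.dichromatic ≤ j + 1 :=
    dicolourable_iff_dichromatic_le.not.1 (hT.not_dicolourable hk h₁.1 h₂.1)
  refine ⟨by omega, fun H hH => ?_⟩
  obtain ⟨a, ha, haH⟩ := hH.exists_mem_arcs_not_mem fun v hv =>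
    hT.exists_mem_arcs_of_mem_verts (verts_nonempty_of_one_lt_dichromatic (by rw [h₁.1]; omega)) hv
  obtain ⟨φ, hφ⟩ := hT.dicolourable_eraseArc h₁ h₂ ha
  exact dicolourable_iff_dichromatic_le.1
    ⟨φ, hφ.of_arcs_subset fun b hb => Finset.mem_erase.2 ⟨ne_of_mem_of_not_mem hb haH, hH.1.2 hb⟩⟩

end IsTriangleJoin

end Digraph'

open Digraph' in
theorem triangle_join_dicritical_general {V : Type*} [DecidableEq V]
    (k : ℕ) (hk : 2 ≤ k) (D₁ D₂ D : Digraph' V) (u₀ : V)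
    (h₁ : Digraph'.Dicritical k D₁)
    (h₂ : Digraph'.Dicritical k D₂)
    (hdisj : Disjoint D₁.verts D₂.verts)
    (hu₁ : u₀ ∉ D₁.verts) (hu₂ : u₀ ∉ D₂.verts)
    (hverts : D.verts = insert u₀ (D₁.verts ∪ D₂.verts))
    (harcs : D.arcs = D₁.arcs ∪ D₂.arcs ∪
      D₁.verts.image (fun v => (u₀, v)) ∪ (D₁.verts ×ˢ D₂.verts) ∪
      D₂.verts.image (fun v => (v, u₀))) :
    Digraph'.Dicritical (k + 1) D :=
  (IsTriangleJoin.mk hdisj hu₁ hu₂ hverts harcs).dicritical hk h₁ h₂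

open Digraph' in
/-- Let `k ≥ 2` and let `D₁`, `D₂` be `k`-dicritical oriented
graphs on disjoint vertex sets. The digraph `△(1, D₁, D₂)`, obtained from the
disjoint union of `D₁` and `D₂` by adding a new vertex `u₀`, all arcs from `u₀`
to `V(D₁)`, all arcs from `V(D₁)` to `V(D₂)` and all arcs from `V(D₂)` to `u₀`,
is `(k+1)`-dicritical. -/
theorem triangle_join_dicritical {V : Type*} [DecidableEq V]
    (k : ℕ) (hk : 2 ≤ k) (D₁ D₂ D : Digraph' V) (u₀ : V)
    (h₁ : Digraph'.Dicritical k D₁) (ho₁ : D₁.Oriented)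
    (h₂ : Digraph'.Dicritical k D₂) (ho₂ : D₂.Oriented)
    (hdisj : Disjoint D₁.verts D₂.verts)
    (hu₁ : u₀ ∉ D₁.verts) (hu₂ : u₀ ∉ D₂.verts)
    (hverts : D.verts = insert u₀ (D₁.verts ∪ D₂.verts))
    (harcs : D.arcs = D₁.arcs ∪ D₂.arcs ∪
      D₁.verts.image (fun v => (u₀, v)) ∪ (D₁.verts ×ˢ D₂.verts) ∪
      D₂.verts.image (fun v => (v, u₀))) :
    Digraph'.Dicritical (k + 1) D :=
  triangle_join_dicritical_general k hk D₁ D₂ D u₀ h₁ h₂ hdisj hu₁ hu₂ hverts harcs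
end
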